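/- arXiv:1912.00259 — 3 statements merged into one kernel-verified Lean document; each statement's English description precedes it below -/
import Mathlib

section
/- Let n = 2, μ := L² + δ_o on ℝ² with the Euclidean distance, where δ_o is the Dirac mass at the origin o, and let u ∈ L¹_loc(ℝ², L²). If o is a Lebesgue point of u with respect to L², with limit value u*(o) (the unique a ∈ ℝ with ⨍_{B_r(o)} |u(y) − a| dy → 0 as r → 0⁺), then the AMV Laplacian Δ_μ u(o) exists and Δ_μ u(o) = π (u*(o) − u(o)). -/
/-!
The Dirac mass raises `μ(B_r(o))` from `πr²` to `πr² + 1` but adds nothing to the integral of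
`u - u(o)`, which vanishes at `o`. Hence `Δ_{μ,r} u(o) = π / (πr² + 1) · ⨍_{B_r(o)} (u - u(o)) dy`,
and at a Lebesgue point the Lebesgue average tends to `u*(o) - u(o)`.
-/

open MeasureTheory Metric Filter Topology Real
open scoped ENNReal

section

variable {α E : Type*} [MeasurableSpace α] [NormedAddCommGroup E] [NormedSpace ℝ E]
  {μ : Measure α} {s : Set α} {f : α → E}

theorem setAverage_sub_const [CompleteSpace E] (hs₀ : μ s ≠ 0) (hs : μ s ≠ ∞)
    (hf : IntegrableOn f s μ) (a : E) :
    ⨍ x in s, (f x - a) ∂μ = (⨍ x in s, f x ∂μ) - a := by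
  rw [setAverage_eq, integral_sub hf (integrableOn_const hs), smul_sub, ← setAverage_eq,
    ← setAverage_eq, setAverage_const hs₀ hs]

theorem norm_setAverage_le (g : α → E) : ‖⨍ x in s, g x ∂μ‖ ≤ ⨍ x in s, ‖g x‖ ∂μ := by
  rw [setAverage_eq, setAverage_eq, norm_smul, Real.norm_of_nonneg (by positivity), smul_eq_mul]
  gcongr
  exact norm_integral_le_integral_norm g

theorem tendsto_setAverage_of_tendsto_setAverage_norm_sub [CompleteSpace E] {ι : Type*}
    {l : Filter ι} {s : ι → Set α} {a : E} (hs₀ : ∀ᶠ i in l, μ (s i) ≠ 0)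
    (hs : ∀ᶠ i in l, μ (s i) ≠ ∞) (hf : ∀ᶠ i in l, IntegrableOn f (s i) μ)
    (h : Tendsto (fun i => ⨍ x in s i, ‖f x - a‖ ∂μ) l (𝓝 0)) :
    Tendsto (fun i => ⨍ x in s i, f x ∂μ) l (𝓝 a) := by
  rw [tendsto_iff_norm_sub_tendsto_zero]
  refine squeeze_zero' (Eventually.of_forall fun _ => norm_nonneg _) ?_ h
  filter_upwards [hs₀, hs, hf] with i hi₀ hi hfi
  rw [← setAverage_sub_const hi₀ hi hfi]
  exact norm_setAverage_le _

theorem setIntegral_add_dirac [MeasurableSingletonClass α] [CompleteSpace E] {ν : Measure α}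
    {x₀ : α} (hx₀ : x₀ ∈ s) (hf : IntegrableOn f s ν) :
    ∫ x in s, f x ∂(ν + Measure.dirac x₀) = ∫ x in s, f x ∂ν + f x₀ := by
  classical
  have hδ : (Measure.dirac x₀).restrict s = Measure.dirac x₀ := by
    rw [restrict_dirac, if_pos hx₀]
  rw [Measure.restrict_add, hδ, integral_add_measure hf (integrable_dirac enorm_lt_top),
    integral_dirac]

end

noncomputable def amvLaplacianScale {X : Type*} [PseudoMetricSpace X] [MeasurableSpace X]
    (μ : Measure X) (u : X → ℝ) (x : X) (r : ℝ) : ℝ :=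
  (1 / r ^ 2) * ⨍ y in ball x r, (u y - u x) ∂μ

theorem amvLaplacianScale_add_dirac_self {X : Type*} [MetricSpace X] [MeasurableSpace X]
    [OpensMeasurableSpace X] {ν : Measure X} {u : X → ℝ} {x : X} {r : ℝ} (hr : 0 < r)
    (hν : ν (ball x r) ≠ ∞) (hu : IntegrableOn u (ball x r) ν) :
    amvLaplacianScale (ν + Measure.dirac x) u x r =
      ν.real (ball x r) / (ν.real (ball x r) + 1) * amvLaplacianScale ν u x r := by
  have hx : x ∈ ball x r := mem_ball_self hr
  have hsub : IntegrableOn (fun y => u y - u x) (ball x r) ν := hu.sub (integrableOn_const hν)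
  have hmeas : (ν + Measure.dirac x).real (ball x r) = ν.real (ball x r) + 1 := by
    rw [measureReal_add_apply hν, measureReal_def (Measure.dirac x),
      Measure.dirac_apply_of_mem hx, ENNReal.toReal_one]
  unfold amvLaplacianScale
  rw [setAverage_eq, setAverage_eq, setIntegral_add_dirac hx hsub, sub_self, add_zero, hmeas,
    smul_eq_mul, smul_eq_mul]
  rcases eq_or_ne (ν.real (ball x r)) 0 with h0 | h0
  · rw [setIntegral_measure_zero _ ((measureReal_eq_zero_iff hν).1 h0)]
    simp
  · field_simp

theorem EuclideanSpace.volume_real_ball_fin_two (x : EuclideanSpace ℝ (Fin 2)) {r : ℝ}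
    (hr : 0 ≤ r) :
    volume.real (ball x r) = π * r ^ 2 := by
  rw [measureReal_def, EuclideanSpace.volume_ball_fin_two, ENNReal.toReal_mul,
    ENNReal.toReal_pow, ENNReal.toReal_ofReal hr, ENNReal.toReal_ofReal pi_pos.le, mul_comm]

/-- For `μ = L² + δ₀` on `ℝ²` and `u ∈ L¹_loc(ℝ², L²)`, if the origin is a
Lebesgue point of `u` with respect to `L²` with Lebesgue value `ustar`, then the AMV Laplacian
of `u` at the origin exists and equals `π (ustar - u(0))`. -/
theorem amv_laplacian_lebesgue_plus_dirac_dim_two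
    (u : EuclideanSpace ℝ (Fin 2) → ℝ) (hu : LocallyIntegrable u volume)
    (μ : Measure (EuclideanSpace ℝ (Fin 2)))
    (hμ : μ = volume + Measure.dirac (0 : EuclideanSpace ℝ (Fin 2)))
    (ustar : ℝ)
    (hleb : Filter.Tendsto
      (fun r : ℝ => ⨍ y in Metric.ball (0 : EuclideanSpace ℝ (Fin 2)) r, |u y - ustar| ∂volume)
      (𝓝[>] (0 : ℝ)) (𝓝 0)) :
    Filter.Tendsto
      (fun r : ℝ =>
        (1 / r ^ 2) * ⨍ y in Metric.ball (0 : EuclideanSpace ℝ (Fin 2)) r, (u y - u 0) ∂μ)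
      (𝓝[>] (0 : ℝ)) (𝓝 (Real.pi * (ustar - u 0))) := by
  have hu_ball (r : ℝ) : IntegrableOn u (ball 0 r) volume :=
    (hu.integrableOn_isCompact (isCompact_closedBall 0 r)).mono_set ball_subset_closedBall
  have hscale : ∀ᶠ r in 𝓝[>] (0 : ℝ), π / (π * r ^ 2 + 1) *
      ⨍ y in ball 0 r, (u y - u 0) = amvLaplacianScale μ u 0 r := by
    filter_upwards [self_mem_nhdsWithin] with r (hr : 0 < r)
    rw [hμ, amvLaplacianScale_add_dirac_self hr measure_ball_lt_top.ne (hu_ball r),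
      EuclideanSpace.volume_real_ball_fin_two 0 hr.le, amvLaplacianScale]
    field_simp
  have havg : Tendsto (fun r => ⨍ y in ball 0 r, (u y - u 0)) (𝓝[>] 0) (𝓝 (ustar - u 0)) := by
    refine tendsto_setAverage_of_tendsto_setAverage_norm_sub ?_
      (.of_forall fun _ => measure_ball_lt_top.ne)
      (.of_forall fun r => (hu_ball r).sub (integrableOn_const measure_ball_lt_top.ne)) ?_
    · filter_upwards [self_mem_nhdsWithin] with r (hr : 0 < r)
      exact (measure_ball_pos volume 0 hr).ne'
    · simpa only [Real.norm_eq_abs, sub_sub_sub_cancel_right] using hleb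
  have hfactor : Tendsto (fun r : ℝ => π / (π * r ^ 2 + 1)) (𝓝[>] 0) (𝓝 π) := by
    have : ContinuousAt (fun r : ℝ => π / (π * r ^ 2 + 1)) 0 :=
      ContinuousAt.div (by fun_prop) (by fun_prop) (by positivity)
    simpa using this.continuousWithinAt.tendsto
  exact (hfactor.mul havg).congr' hscale
end

section
/- Let (X,d,μ) be a proper metric measure space (closed bounded sets are compact) with μ a Borel measure that is positive on every nonempty open set and finite on balls. Let Ω ⊆ X be a nonempty bounded open set with nonempty boundary ∂Ω, and let u : Ω̄ → ℝ be continuous on Ω̄ with u ∈ L¹_loc(Ω,μ), such that the AMV Laplacian Δ_μ u(x) exists and equals 0 for every x ∈ Ω. Assume there exists a bounded function φ, upper semicontinuous on Ω̄, such that Δ̲_μ φ(x) > 0 for every x ∈ Ω. Then max_{∂Ω} u = max_{Ω̄} u and min_{∂Ω} u = min_{Ω̄} u. -/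
/-!
At a maximum point `x` of a function on `Ω̄` every mean-value quotient `Δ_{μ,r}` is `≤ 0`. If
`u` is AMV harmonic and `Δ̲_μ φ > 0` in `Ω`, then `Δ_{μ,r}(u + εφ)(x) = Δ_{μ,r}u(x) + εΔ_{μ,r}φ(x)`
is positive for small `r` at every `x ∈ Ω`, so the u.s.c. function `u + εφ`, which attains its
maximum on the compact set `Ω̄`, attains it only on `∂Ω`. Hence `u ≤ max_{∂Ω} u + 2ε sup |φ|` on
`Ω̄` for every `ε > 0`. The minimum principle is the maximum principle for `-u`.
-/

open MeasureTheory Metric Filter Topology Set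

/-- `Δ_{μ,r} f(x)`, averaging over `B_r(x) ∩ K`; the theorem takes `K = Ω̄`. -/
noncomputable def amvLaplacianAtScale {X : Type*} [PseudoMetricSpace X] [MeasurableSpace X]
    (μ : Measure X) (K : Set X) (f : X → ℝ) (x : X) (r : ℝ) : ℝ :=
  1 / r ^ 2 * ⨍ y in ball x r ∩ K, (f y - f x) ∂μ

theorem UpperSemicontinuousOn.aestronglyMeasurable {X : Type*} [TopologicalSpace X]
    [MeasurableSpace X] [OpensMeasurableSpace X] {μ : Measure X} {f : X → ℝ} {K : Set X}
    (hf : UpperSemicontinuousOn f K) (hK : MeasurableSet K) :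
    AEStronglyMeasurable f (μ.restrict K) :=
  (aemeasurable_restrict_of_measurable_subtype hK
    (upperSemicontinuousOn_iff_restrict.2 hf).measurable).aestronglyMeasurable

theorem Filter.eventually_pos_add_mul_of_tendsto_zero_of_liminf_pos {α : Type*} {l : Filter α}
    {a b : α → ℝ} (ha : Tendsto a l (𝓝 0)) (hb : 0 < liminf b l) {ε : ℝ} (hε : 0 < ε) :
    ∀ᶠ r in l, 0 < a r + ε * b r := by
  have hb_bdd : IsBoundedUnder (· ≥ ·) l b := by
    by_contra h
    exact hb.ne' (Real.liminf_of_not_isBoundedUnder h)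
  have hb_half : ∀ᶠ r in l, liminf b l / 2 < b r :=
    eventually_lt_of_lt_liminf (half_lt_self hb) hb_bdd
  have ha_small : ∀ᶠ r in l, -(ε * (liminf b l / 2)) < a r :=
    ha.eventually (lt_mem_nhds (neg_lt_zero.2 (by positivity)))
  filter_upwards [hb_half, ha_small] with r hbr har
  nlinarith

theorem integrable_average_restrict_inter {α : Type*} [MeasurableSpace α] {μ : Measure α}
    {K : Set α} {f : α → ℝ} (hK : MeasurableSet K)
    (hf : AEStronglyMeasurable f (μ.restrict K)) (hfb : Bornology.IsBounded (f '' K)) (s : Set α) :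
    Integrable f ((μ.restrict (s ∩ K) univ)⁻¹ • μ.restrict (s ∩ K)) := by
  obtain ⟨C, hC⟩ := isBounded_iff_forall_norm_le.1 hfb
  have hsK : μ.restrict (s ∩ K) ≤ μ.restrict K := Measure.restrict_mono inter_subset_right le_rfl
  refine Integrable.of_bound ((hf.mono_measure hsK).smul_measure _) C (Measure.ae_smul_measure ?_ _)
  filter_upwards [ae_restrict_of_ae_restrict_of_subset inter_subset_right (ae_restrict_mem hK)]
    with y hy using hC _ (mem_image_of_mem f hy)

section AMV

variable {X : Type*} [PseudoMetricSpace X] [MeasurableSpace X] {μ : Measure X} {K : Set X}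
  {f g : X → ℝ} {x : X}

theorem amvLaplacianAtScale_add_mul (hK : MeasurableSet K)
    (hf : AEStronglyMeasurable f (μ.restrict K)) (hfb : Bornology.IsBounded (f '' K))
    (hg : AEStronglyMeasurable g (μ.restrict K)) (hgb : Bornology.IsBounded (g '' K))
    (c : ℝ) (r : ℝ) :
    amvLaplacianAtScale μ K (fun y => f y + c * g y) x r =
      amvLaplacianAtScale μ K f x r + c * amvLaplacianAtScale μ K g x r := by
  set ν := (μ.restrict (ball x r ∩ K) univ)⁻¹ • μ.restrict (ball x r ∩ K)
  have hfi : Integrable (fun y => f y - f x) ν :=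
    (integrable_average_restrict_inter hK hf hfb (ball x r)).sub (integrable_const (f x))
  have hgi : Integrable (fun y => g y - g x) ν :=
    (integrable_average_restrict_inter hK hg hgb (ball x r)).sub (integrable_const (g x))
  have hsplit : ∀ y, f y + c * g y - (f x + c * g x) = (f y - f x) + c * (g y - g x) :=
    fun y => by ring
  simp only [amvLaplacianAtScale, hsplit, average_eq']
  rw [integral_add hfi (hgi.const_mul c), integral_const_mul]
  ring

theorem amvLaplacianAtScale_neg :
    amvLaplacianAtScale μ K (-f) x = -amvLaplacianAtScale μ K f x := by
  ext r
  have hneg : ∀ y, -f y - -f x = -(f y - f x) := fun y => by ring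
  simp only [amvLaplacianAtScale, Pi.neg_apply, hneg, average_neg, mul_neg]

theorem IsMaxOn.amvLaplacianAtScale_nonpos (hK : MeasurableSet K) (hx : IsMaxOn f K x) (r : ℝ) :
    amvLaplacianAtScale μ K f x r ≤ 0 := by
  refine mul_nonpos_of_nonneg_of_nonpos (by positivity) ?_
  rw [average_eq']
  refine integral_nonpos_of_ae (Measure.ae_smul_measure ?_ _)
  filter_upwards [ae_restrict_of_ae_restrict_of_subset inter_subset_right (ae_restrict_mem hK)]
    with y hy using sub_nonpos.2 (hx hy)

theorem not_isMaxOn_add_mul (hK : MeasurableSet K)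
    (hf : AEStronglyMeasurable f (μ.restrict K)) (hfb : Bornology.IsBounded (f '' K))
    (hg : AEStronglyMeasurable g (μ.restrict K)) (hgb : Bornology.IsBounded (g '' K))
    (hf0 : Tendsto (amvLaplacianAtScale μ K f x) (𝓝[>] 0) (𝓝 0))
    (hg0 : 0 < liminf (amvLaplacianAtScale μ K g x) (𝓝[>] 0)) {ε : ℝ} (hε : 0 < ε) :
    ¬ IsMaxOn (fun y => f y + ε * g y) K x := by
  intro hmax
  obtain ⟨r, hr⟩ := (eventually_pos_add_mul_of_tendsto_zero_of_liminf_pos hf0 hg0 hε).exists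
  have := hmax.amvLaplacianAtScale_nonpos (μ := μ) hK r
  rw [amvLaplacianAtScale_add_mul hK hf hfb hg hgb] at this
  linarith

end AMV

theorem IsMaxOn.csSup_image_eq {α β : Type*} [ConditionallyCompleteLinearOrder β] {f : α → β}
    {s t : Set α} {a : α} (hf : IsMaxOn f t a) (ha : a ∈ s) (hst : s ⊆ t) :
    sSup (f '' s) = sSup (f '' t) :=
  csSup_eq_csSup_of_forall_exists_le (fun _ hy => ⟨_, image_mono hst hy, le_rfl⟩)
    (by rintro _ ⟨y, hy, rfl⟩; exact ⟨f a, mem_image_of_mem f ha, hf hy⟩)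

theorem IsMinOn.csInf_image_eq {α β : Type*} [ConditionallyCompleteLinearOrder β] {f : α → β}
    {s t : Set α} {a : α} (hf : IsMinOn f t a) (ha : a ∈ s) (hst : s ⊆ t) :
    sInf (f '' s) = sInf (f '' t) :=
  csInf_eq_csInf_of_forall_exists_le (fun _ hy => ⟨_, image_mono hst hy, le_rfl⟩)
    (by rintro _ ⟨y, hy, rfl⟩; exact ⟨f a, mem_image_of_mem f ha, hf hy⟩)

section MaximumPrinciple

variable {X : Type*} [PseudoMetricSpace X] [ProperSpace X] [MeasurableSpace X]
  [OpensMeasurableSpace X] {μ : Measure X} {Ω : Set X} {u φ : X → ℝ}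

theorem exists_mem_frontier_isMaxOn_add_mul (hΩo : IsOpen Ω) (hΩb : Bornology.IsBounded Ω)
    (hfr : (frontier Ω).Nonempty) (hcont : ContinuousOn u (closure Ω))
    (hharm : ∀ x ∈ Ω, Tendsto (amvLaplacianAtScale μ (closure Ω) u x) (𝓝[>] 0) (𝓝 0))
    (hφb : Bornology.IsBounded (φ '' closure Ω)) (hφusc : UpperSemicontinuousOn φ (closure Ω))
    (hφ : ∀ x ∈ Ω, 0 < liminf (amvLaplacianAtScale μ (closure Ω) φ x) (𝓝[>] 0))
    {ε : ℝ} (hε : 0 < ε) :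
    ∃ x ∈ frontier Ω, IsMaxOn (fun y => u y + ε * φ y) (closure Ω) x := by
  have hK : MeasurableSet (closure Ω) := isClosed_closure.measurableSet
  have hKc : IsCompact (closure Ω) := hΩb.isCompact_closure
  have husc : UpperSemicontinuousOn (fun y => u y + ε * φ y) (closure Ω) :=
    hcont.upperSemicontinuousOn.add <| Continuous.comp_upperSemicontinuousOn
      (continuous_const_mul ε) hφusc (monotone_mul_left_of_nonneg hε.le)
  obtain ⟨x, hxK, hmax⟩ := husc.exists_isMaxOn (hfr.mono frontier_subset_closure) hKc
  refine ⟨x, ?_, hmax⟩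
  rw [hΩo.frontier_eq]
  exact ⟨hxK, fun hxΩ => not_isMaxOn_add_mul hK (hcont.aestronglyMeasurable hK)
    (hKc.image_of_continuousOn hcont).isBounded (hφusc.aestronglyMeasurable hK) hφb
    (hharm x hxΩ) (hφ x hxΩ) hε hmax⟩

theorem exists_mem_frontier_isMaxOn (hΩo : IsOpen Ω) (hΩb : Bornology.IsBounded Ω)
    (hfr : (frontier Ω).Nonempty) (hcont : ContinuousOn u (closure Ω))
    (hharm : ∀ x ∈ Ω, Tendsto (amvLaplacianAtScale μ (closure Ω) u x) (𝓝[>] 0) (𝓝 0))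
    (hφb : Bornology.IsBounded (φ '' closure Ω)) (hφusc : UpperSemicontinuousOn φ (closure Ω))
    (hφ : ∀ x ∈ Ω, 0 < liminf (amvLaplacianAtScale μ (closure Ω) φ x) (𝓝[>] 0)) :
    ∃ z ∈ frontier Ω, IsMaxOn u (closure Ω) z := by
  have hfrc : IsCompact (frontier Ω) :=
    hΩb.isCompact_closure.of_isClosed_subset isClosed_frontier frontier_subset_closure
  obtain ⟨z, hz, hzmax⟩ := hfrc.exists_isMaxOn hfr (hcont.mono frontier_subset_closure)
  refine ⟨z, hz, fun y hy => ?_⟩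
  obtain ⟨C, hC⟩ := isBounded_iff_forall_norm_le.1 hφb
  have hφC : ∀ y ∈ closure Ω, |φ y| ≤ C := fun y hy => hC _ (mem_image_of_mem φ hy)
  have hclose : ∀ ε > 0, u y ≤ u z + ε * (2 * C) := by
    intro ε hε
    obtain ⟨x, hx, hxmax⟩ :=
      exists_mem_frontier_isMaxOn_add_mul hΩo hΩb hfr hcont hharm hφb hφusc hφ hε
    have hxy : u y + ε * φ y ≤ u x + ε * φ x := hxmax hy
    have hxz : u x ≤ u z := hzmax hx
    have hφy := abs_le.1 (hφC y hy)
    have hφx := abs_le.1 (hφC x (frontier_subset_closure hx))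
    nlinarith
  have hlim : Tendsto (fun ε => u z + ε * (2 * C)) (𝓝[>] 0) (𝓝 (u z)) := by
    have hcont_lin : Continuous fun ε : ℝ => u z + ε * (2 * C) := by fun_prop
    simpa using (hcont_lin.tendsto 0).mono_left nhdsWithin_le_nhds
  exact ge_of_tendsto hlim (eventually_nhdsWithin_of_forall hclose)

end MaximumPrinciple

theorem weak_max_min_principle_amv_harmonic_general
    {X : Type*} [MetricSpace X] [ProperSpace X] [MeasurableSpace X] [BorelSpace X]
    (μ : Measure X)
    (Ω : Set X) (hΩo : IsOpen Ω) (hΩb : Bornology.IsBounded Ω)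
    (hfr : (frontier Ω).Nonempty)
    (u : X → ℝ)
    (hcont : ContinuousOn u (closure Ω))
    (hharm : ∀ x ∈ Ω, Filter.Tendsto
      (fun r : ℝ => (1 / r ^ 2) * ⨍ y in Metric.ball x r ∩ closure Ω, (u y - u x) ∂μ)
      (𝓝[>] (0 : ℝ)) (𝓝 0))
    (φ : X → ℝ)
    (hφb : Bornology.IsBounded (φ '' closure Ω))
    (hφusc : UpperSemicontinuousOn φ (closure Ω))
    (hφ : ∀ x ∈ Ω, 0 < Filter.liminf
      (fun r : ℝ => (1 / r ^ 2) * ⨍ y in Metric.ball x r ∩ closure Ω, (φ y - φ x) ∂μ)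
      (𝓝[>] (0 : ℝ))) :
    sSup (u '' frontier Ω) = sSup (u '' closure Ω) ∧
    sInf (u '' frontier Ω) = sInf (u '' closure Ω) := by
  have hharm_neg : ∀ x ∈ Ω,
      Tendsto (amvLaplacianAtScale μ (closure Ω) (-u) x) (𝓝[>] 0) (𝓝 0) := fun x hx => by
    have h := (hharm x hx).neg
    rw [neg_zero] at h
    rw [amvLaplacianAtScale_neg]
    exact h
  obtain ⟨z, hz, hmax⟩ := exists_mem_frontier_isMaxOn hΩo hΩb hfr hcont hharm hφb hφusc hφ
  obtain ⟨w, hw, hmax_neg⟩ :=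
    exists_mem_frontier_isMaxOn hΩo hΩb hfr hcont.neg hharm_neg hφb hφusc hφ
  have hmin : IsMinOn u (closure Ω) w := fun y hy =>
    show u w ≤ u y from neg_le_neg_iff.1 (hmax_neg hy)
  exact ⟨hmax.csSup_image_eq hz frontier_subset_closure,
    hmin.csInf_image_eq hw frontier_subset_closure⟩

/-- Weak maximum and minimum principle for AMV harmonic functions: on a proper
metric measure space, if `u` is continuous on `Ω̄`, locally integrable on `Ω`, with AMV
Laplacian existing and equal to `0` on `Ω`, and there is a bounded u.s.c. function `φ` with
lower AMV Laplacian `> 0` on `Ω`, then `max_{∂Ω} u = max_{Ω̄} u` and `min_{∂Ω} u = min_{Ω̄} u`. -/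
theorem weak_max_min_principle_amv_harmonic
    {X : Type*} [MetricSpace X] [ProperSpace X] [MeasurableSpace X] [BorelSpace X]
    (μ : Measure X) [μ.IsOpenPosMeasure]
    (hfin : ∀ (x : X) (r : ℝ), μ (Metric.ball x r) < ⊤)
    (Ω : Set X) (hΩo : IsOpen Ω) (hΩne : Ω.Nonempty) (hΩb : Bornology.IsBounded Ω)
    (hfr : (frontier Ω).Nonempty)
    (u : X → ℝ)
    (hcont : ContinuousOn u (closure Ω))
    (hloc : LocallyIntegrableOn u Ω μ)
    (hharm : ∀ x ∈ Ω, Filter.Tendsto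
      (fun r : ℝ => (1 / r ^ 2) * ⨍ y in Metric.ball x r ∩ closure Ω, (u y - u x) ∂μ)
      (𝓝[>] (0 : ℝ)) (𝓝 0))
    (φ : X → ℝ)
    (hφb : Bornology.IsBounded (φ '' closure Ω))
    (hφusc : UpperSemicontinuousOn φ (closure Ω))
    (hφ : ∀ x ∈ Ω, 0 < Filter.liminf
      (fun r : ℝ => (1 / r ^ 2) * ⨍ y in Metric.ball x r ∩ closure Ω, (φ y - φ x) ∂μ)
      (𝓝[>] (0 : ℝ))) :
    sSup (u '' frontier Ω) = sSup (u '' closure Ω) ∧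
    sInf (u '' frontier Ω) = sInf (u '' closure Ω) :=
  weak_max_min_principle_amv_harmonic_general μ Ω hΩo hΩb hfr u hcont hharm φ hφb hφusc hφ
end

section
/- Let (X,d,μ) be a metric measure space with μ(B_r(x)) positive and finite for every ball, fix r > 0, and set w(x) := ∫_{B_r(x)} dμ(y)/μ(B_r(y)). Then for every 1 ≤ p ≤ ∞: if u ∈ L^p(X,μ) ∩ L^p(X, w μ), then Δ_{μ,r} u ∈ L^p(X,μ) and ‖Δ_{μ,r} u‖_{L^p(X,μ)} ≤ r^{-2} (‖u‖_{L^p(X,μ)} + ‖u‖_{L^p(X, w μ)}). -/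
/-!
Write `Δ_{μ,r} u = r⁻² (A u - u)` with `A u (x) = ⨍_{B_r(x)} u`; Minkowski reduces everything to
`‖A u‖_{L^p(μ)} ≤ ‖u‖_{L^p(wμ)}`. For `p < ∞`, Jensen gives `|A u (x)|^p ≤ ⨍_{B_r(x)} |u|^p`, and
integrating in `x` and swapping the integrals (`y ∈ B_r(x) ↔ x ∈ B_r(y)`) turns the right-hand side
into `∫ |u|^p w dμ`. For `p = ∞`, `|A u (x)| ≤ ‖u‖_{L^∞(μ)}`, and `μ ≪ wμ` since `w > 0`.

Tonelli needs `{(x, y) | d(x, y) < r}` to be measurable for the product σ-algebra, i.e. `X`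
separable. This holds because a maximal `ε`-separated set indexes disjoint balls of positive
measure, hence is countable when `μ` is σ-finite.
-/

open MeasureTheory Metric Filter Function
open scoped ENNReal

theorem Metric.exists_maximal_isSeparated {X : Type*} [PseudoEMetricSpace X] (ε : ℝ≥0∞)
    (s : Set X) : ∃ N, Maximal (fun N ↦ N ⊆ s ∧ IsSeparated ε N) N := by
  refine zorn_subset _ fun c hcS hc ↦ ⟨⋃₀ c, ⟨Set.sUnion_subset fun N hN ↦ (hcS hN).1, ?_⟩,
    fun _ ↦ Set.subset_sUnion_of_mem⟩
  exact hc.pairwise_sUnion.mpr fun N hN ↦ (hcS hN).2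

theorem Metric.IsSeparated.countable {X : Type*} [PseudoEMetricSpace X] [MeasurableSpace X]
    [OpensMeasurableSpace X] (μ : Measure X) [SFinite μ] [μ.IsOpenPosMeasure] {ε : ℝ≥0∞}
    (hε : 0 < ε) {N : Set X} (hN : IsSeparated ε N) : N.Countable := by
  have hdisj : Pairwise (Disjoint on fun y : N ↦ eball (y : X) (ε / 2)) :=
    fun y z hyz ↦ eball_disjoint <| by
      rw [ENNReal.add_halves]
      exact (hN y.2 z.2 (Subtype.coe_ne_coe.mpr hyz)).le
  have hpos : ∀ y : N, 0 < μ (eball (y : X) (ε / 2)) := fun y ↦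
    isOpen_eball.measure_pos μ ⟨y, mem_eball_self (ENNReal.half_pos hε.ne')⟩
  have := Measure.countable_meas_pos_of_disjoint_iUnion (μ := μ)
    (fun _ ↦ isOpen_eball.measurableSet) hdisj
  simp only [hpos, Set.ofPred_true, Set.countable_univ_iff] at this
  exact Set.countable_coe_iff.mp this

theorem secondCountableTopology_of_isOpenPosMeasure {X : Type*} [PseudoMetricSpace X]
    [MeasurableSpace X] [OpensMeasurableSpace X] (μ : Measure X) [SFinite μ]
    [μ.IsOpenPosMeasure] :
    SecondCountableTopology X := by
  refine Metric.secondCountable_of_almost_dense_set fun ε hε ↦ ?_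
  obtain ⟨N, hN⟩ := exists_maximal_isSeparated (ε.toNNReal : ℝ≥0∞) (Set.univ : Set X)
  refine ⟨N, hN.1.2.countable μ (by simpa using hε), fun x ↦ ?_⟩
  have := isCover_iff_subset_iUnion_closedBall.mp (IsCover.of_maximal_isSeparated hN)
    (Set.mem_univ x)
  simpa [hε.le] using this

theorem sigmaFinite_of_measure_ball_lt_top {X : Type*} [PseudoMetricSpace X] [MeasurableSpace X]
    {μ : Measure X} (h : ∀ x (r : ℝ), μ (ball x r) < ∞) : SigmaFinite μ := by
  rcases isEmpty_or_nonempty X with _ | ⟨⟨x₀⟩⟩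
  · infer_instance
  · exact ⟨⟨⟨fun n ↦ ball x₀ n, fun _ ↦ trivial, fun n ↦ h x₀ n, iUnion_ball_nat x₀⟩⟩⟩

theorem isOpenPosMeasure_of_measure_ball_pos {X : Type*} [PseudoMetricSpace X]
    [MeasurableSpace X] {μ : Measure X} (h : ∀ x (r : ℝ), 0 < r → 0 < μ (ball x r)) :
    μ.IsOpenPosMeasure := by
  refine ⟨fun U hU ⟨x, hx⟩ ↦ ?_⟩
  obtain ⟨r, hr, hrU⟩ := Metric.isOpen_iff.mp hU x hx
  exact ((h x r hr).trans_le (measure_mono hrU)).ne'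

section Average

variable {α E : Type*} [MeasurableSpace α] [NormedAddCommGroup E] [NormedSpace ℝ E]
  {μ : Measure α} {f : α → E}

theorem average_sub_const [CompleteSpace E] [IsFiniteMeasure μ] [NeZero μ] (hf : Integrable f μ)
    (c : E) :
    ⨍ x, (f x - c) ∂μ = ⨍ x, f x ∂μ - c := by
  rw [average_eq, integral_sub hf (integrable_const c), smul_sub, ← average_eq, ← average_eq,
    average_const]

theorem enorm_average_le_eLpNorm_top (μ : Measure α) (f : α → E) :
    ‖⨍ x, f x ∂μ‖ₑ ≤ eLpNorm f ∞ μ := by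
  set ν := (μ Set.univ)⁻¹ • μ
  calc ‖⨍ x, f x ∂μ‖ₑ ≤ ∫⁻ x, ‖f x‖ₑ ∂ν := enorm_integral_le_lintegral_enorm f
    _ ≤ ∫⁻ _, eLpNormEssSup f ν ∂ν := lintegral_mono_ae (enorm_ae_le_eLpNormEssSup f ν)
    _ = eLpNormEssSup f ν * ν Set.univ := lintegral_const _
    _ ≤ eLpNormEssSup f μ * 1 := by
        gcongr
        · exact Measure.smul_absolutelyContinuous
        · exact ENNReal.inv_mul_le_one _
    _ = eLpNorm f ∞ μ := by rw [mul_one, eLpNorm_exponent_top]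

theorem enorm_average_rpow_le_laverage [IsFiniteMeasure μ] [NeZero μ]
    (hf : AEStronglyMeasurable f μ) {t : ℝ} (ht : 1 ≤ t) :
    ‖⨍ x, f x ∂μ‖ₑ ^ t ≤ ⨍⁻ x, ‖f x‖ₑ ^ t ∂μ := by
  set ν := (μ Set.univ)⁻¹ • μ
  have ht0 : 0 < t := one_pos.trans_le ht
  have hfν : AEStronglyMeasurable f ν := hf.smul_measure _
  have hJensen : ‖⨍ x, f x ∂μ‖ₑ ≤ (∫⁻ x, ‖f x‖ₑ ^ t ∂ν) ^ (1 / t) :=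
    calc ‖⨍ x, f x ∂μ‖ₑ ≤ ∫⁻ x, ‖f x‖ₑ ∂ν := enorm_integral_le_lintegral_enorm f
      _ = eLpNorm f 1 ν := eLpNorm_one_eq_lintegral_enorm.symm
      _ ≤ eLpNorm f (ENNReal.ofReal t) ν :=
          eLpNorm_le_eLpNorm_of_exponent_le (by simpa using ht) hfν
      _ = (∫⁻ x, ‖f x‖ₑ ^ t ∂ν) ^ (1 / t) := by
          rw [eLpNorm_eq_lintegral_rpow_enorm_toReal (by simpa using ht0) ENNReal.ofReal_ne_top,
            ENNReal.toReal_ofReal ht0.le]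
  calc ‖⨍ x, f x ∂μ‖ₑ ^ t ≤ ((∫⁻ x, ‖f x‖ₑ ^ t ∂ν) ^ (1 / t)) ^ t := by gcongr
    _ = ⨍⁻ x, ‖f x‖ₑ ^ t ∂μ := by
        rw [← ENNReal.rpow_mul, one_div_mul_cancel ht0.ne', ENNReal.rpow_one, laverage_eq']

end Average

section Ball

variable {X E : Type*} [PseudoMetricSpace X] [MeasurableSpace X] [NormedAddCommGroup E]
  [NormedSpace ℝ E] (μ : Measure X) (r : ℝ)

noncomputable def ballAverage (f : X → E) (x : X) : E := ⨍ y in ball x r, f y ∂μ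

noncomputable def ballWeight (x : X) : ℝ≥0∞ := ∫⁻ y in ball x r, (μ (ball y r))⁻¹ ∂μ

variable {μ r}

theorem ballAverage_congr_ae {f g : X → E} (h : f =ᵐ[μ] g) :
    ballAverage μ r f = ballAverage μ r g :=
  funext fun _ ↦ average_congr (ae_restrict_of_ae h)

theorem eLpNorm_ballAverage_top_le (f : X → E) :
    eLpNorm (ballAverage μ r f) ∞ μ ≤ eLpNorm f ∞ μ :=
  eLpNorm_exponent_top.trans_le <| eLpNormEssSup_le_of_ae_enorm_bound <| ae_of_all _ fun _ ↦
    (enorm_average_le_eLpNorm_top _ f).trans (eLpNorm_restrict_le _ _ _ _)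

variable [OpensMeasurableSpace X] [SecondCountableTopology X]

theorem measurableSet_setOf_mem_ball : MeasurableSet {q : X × X | q.2 ∈ ball q.1 r} :=
  measurableSet_lt (measurable_snd.dist measurable_fst) measurable_const

variable [SFinite μ]

theorem measurable_measure_ball : Measurable fun x ↦ μ (ball x r) :=
  measurable_measure_prodMk_left measurableSet_setOf_mem_ball

theorem Measurable.setLIntegral_ball {f : X → ℝ≥0∞} (hf : Measurable f) :
    Measurable fun x ↦ ∫⁻ y in ball x r, f y ∂μ := by
  simp_rw [← lintegral_indicator measurableSet_ball]
  exact ((hf.comp measurable_snd).indicator measurableSet_setOf_mem_ball).lintegral_prod_right'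

theorem measurable_ballWeight : Measurable (ballWeight μ r) :=
  measurable_measure_ball.inv.setLIntegral_ball

theorem MeasureTheory.StronglyMeasurable.ballAverage {f : X → E} (hf : StronglyMeasurable f) :
    StronglyMeasurable (ballAverage μ r f) := by
  have hint : StronglyMeasurable fun x ↦ ∫ y in ball x r, f y ∂μ := by
    simp_rw [← integral_indicator measurableSet_ball]
    exact ((hf.comp_measurable measurable_snd).indicator
      measurableSet_setOf_mem_ball).integral_prod_right'
  unfold _root_.ballAverage
  simp_rw [setAverage_eq, measureReal_def]
  exact (measurable_measure_ball.ennreal_toReal.inv.stronglyMeasurable).smul hint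

theorem lintegral_setLAverage_ball {f : X → ℝ≥0∞} (hf : Measurable f) :
    ∫⁻ x, ⨍⁻ y in ball x r, f y ∂μ ∂μ = ∫⁻ y, f y ∂μ.withDensity (ballWeight μ r) := by
  set S := {q : X × X | q.2 ∈ ball q.1 r}
  set F : X × X → ℝ≥0∞ := S.indicator fun q ↦ (μ (ball q.1 r))⁻¹ * f q.2
  have hF : Measurable F :=
    ((measurable_measure_ball.inv.comp measurable_fst).mul (hf.comp measurable_snd)).indicator
      measurableSet_setOf_mem_ball
  calc ∫⁻ x, ⨍⁻ y in ball x r, f y ∂μ ∂μ = ∫⁻ x, ∫⁻ y, F (x, y) ∂μ ∂μ := by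
        refine lintegral_congr fun x ↦ ?_
        rw [setLAverage_eq, ENNReal.div_eq_inv_mul, ← lintegral_const_mul _ hf,
          ← lintegral_indicator measurableSet_ball]
        rfl
    _ = ∫⁻ y, ∫⁻ x, F (x, y) ∂μ ∂μ := lintegral_lintegral_swap hF.aemeasurable
    _ = ∫⁻ y, ballWeight μ r y * f y ∂μ := by
        refine lintegral_congr fun y ↦ ?_
        have hsec : (fun x ↦ F (x, y)) =
            (ball y r).indicator fun x ↦ (μ (ball x r))⁻¹ * f y := by
          ext x
          classical exact if_congr mem_ball_comm rfl rfl
        rw [hsec, lintegral_indicator measurableSet_ball,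
          lintegral_mul_const (f := fun x ↦ (μ (ball x r))⁻¹) _ measurable_measure_ball.inv,
          ballWeight]
    _ = ∫⁻ y, f y ∂μ.withDensity (ballWeight μ r) :=
        (lintegral_withDensity_eq_lintegral_mul _ measurable_ballWeight hf).symm

theorem ballWeight_ne_zero {x : X} (hpos : μ (ball x r) ≠ 0) (hfin : ∀ y, μ (ball y r) ≠ ∞) :
    ballWeight μ r x ≠ 0 := by
  intro h0
  rw [ballWeight, lintegral_eq_zero_iff' (f := fun y ↦ (μ (ball y r))⁻¹)
    measurable_measure_ball.inv.aemeasurable] at h0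
  have hfalse : ∀ᵐ y ∂μ.restrict (ball x r), False :=
    h0.mono fun y hy ↦ ENNReal.inv_ne_zero.mpr (hfin y) hy
  exact hpos <| Measure.restrict_eq_zero.mp <| ae_eq_bot.mp <|
    eventually_false_iff_eq_bot.mp hfalse

variable (hpos : ∀ x, μ (ball x r) ≠ 0) (hfin : ∀ x, μ (ball x r) ≠ ∞)
include hpos hfin

theorem absolutelyContinuous_withDensity_ballWeight : μ ≪ μ.withDensity (ballWeight μ r) :=
  withDensity_absolutelyContinuous' measurable_ballWeight.aemeasurable
    (ae_of_all _ fun x ↦ ballWeight_ne_zero (hpos x) hfin)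

theorem lintegral_enorm_ballAverage_rpow_le {f : X → E} (hf : StronglyMeasurable f) {t : ℝ}
    (ht : 1 ≤ t) :
    ∫⁻ x, ‖ballAverage μ r f x‖ₑ ^ t ∂μ ≤ ∫⁻ y, ‖f y‖ₑ ^ t ∂μ.withDensity (ballWeight μ r) :=
  calc ∫⁻ x, ‖ballAverage μ r f x‖ₑ ^ t ∂μ ≤ ∫⁻ x, ⨍⁻ y in ball x r, ‖f y‖ₑ ^ t ∂μ ∂μ :=
        lintegral_mono fun x ↦ by
          have : IsFiniteMeasure (μ.restrict (ball x r)) := isFiniteMeasure_restrict.mpr (hfin x)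
          have : NeZero (μ.restrict (ball x r)) := ⟨by simpa using hpos x⟩
          exact enorm_average_rpow_le_laverage hf.aestronglyMeasurable ht
    _ = ∫⁻ y, ‖f y‖ₑ ^ t ∂μ.withDensity (ballWeight μ r) :=
        lintegral_setLAverage_ball (hf.enorm.pow_const t)

theorem eLpNorm_ballAverage_le {f : X → E} (hf : AEStronglyMeasurable f μ) {p : ℝ≥0∞}
    (hp : 1 ≤ p) :
    eLpNorm (ballAverage μ r f) p μ ≤ eLpNorm f p (μ.withDensity (ballWeight μ r)) := by
  rw [ballAverage_congr_ae hf.ae_eq_mk,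
    eLpNorm_congr_ae ((withDensity_absolutelyContinuous μ _).ae_le hf.ae_eq_mk)]
  obtain rfl | hp_top := eq_or_ne p ∞
  · refine (eLpNorm_ballAverage_top_le _).trans ?_
    simp only [eLpNorm_exponent_top]
    exact eLpNormEssSup_mono_measure _ (absolutelyContinuous_withDensity_ballWeight hpos hfin)
  · have hp0 : p ≠ 0 := (one_pos.trans_le hp).ne'
    rw [eLpNorm_eq_lintegral_rpow_enorm_toReal hp0 hp_top,
      eLpNorm_eq_lintegral_rpow_enorm_toReal hp0 hp_top]
    gcongr ?_ ^ _
    exact lintegral_enorm_ballAverage_rpow_le hpos hfin hf.stronglyMeasurable_mk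
      (ENNReal.toReal_mono hp_top hp)

end Ball

/-- For a metric measure space with balls of positive finite measure, `r > 0` and
`w(x) := ∫_{B_r(x)} dμ(y)/μ(B_r(y))`: for every `1 ≤ p ≤ ∞`, if `u ∈ L^p(X,μ) ∩ L^p(X,wμ)` then
`Δ_{μ,r} u ∈ L^p(X,μ)` and `‖Δ_{μ,r} u‖_{L^p(μ)} ≤ r⁻² (‖u‖_{L^p(μ)} + ‖u‖_{L^p(wμ)})`. -/
theorem amv_r_laplacian_Lp_bound
    {X : Type*} [MetricSpace X] [MeasurableSpace X] [BorelSpace X]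
    (μ : Measure X)
    (hpos : ∀ (x : X) (r : ℝ), 0 < r → 0 < μ (Metric.ball x r))
    (hfin : ∀ (x : X) (r : ℝ), μ (Metric.ball x r) < ⊤)
    (r : ℝ) (hr : 0 < r)
    (w : X → ℝ≥0∞)
    (hw : w = fun x => ∫⁻ y in Metric.ball x r, (μ (Metric.ball y r))⁻¹ ∂μ)
    (p : ℝ≥0∞) (hp : 1 ≤ p)
    (u : X → ℝ) (hu : MemLp u p μ) (hu' : MemLp u p (μ.withDensity w)) :
    MemLp (fun x => (1 / r ^ 2) * ⨍ y in Metric.ball x r, (u y - u x) ∂μ) p μ ∧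
    eLpNorm (fun x => (1 / r ^ 2) * ⨍ y in Metric.ball x r, (u y - u x) ∂μ) p μ ≤
      ENNReal.ofReal (1 / r ^ 2) * (eLpNorm u p μ + eLpNorm u p (μ.withDensity w)) := by
  obtain rfl : w = ballWeight μ r := hw
  have : SigmaFinite μ := sigmaFinite_of_measure_ball_lt_top hfin
  have : μ.IsOpenPosMeasure := isOpenPosMeasure_of_measure_ball_pos hpos
  have : SecondCountableTopology X := secondCountableTopology_of_isOpenPosMeasure μ
  have hpos_r : ∀ x, μ (ball x r) ≠ 0 := fun x ↦ (hpos x r hr).ne'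
  have hfin_r : ∀ x, μ (ball x r) ≠ ∞ := fun x ↦ (hfin x r).ne
  have hA : AEStronglyMeasurable (ballAverage μ r u) μ := by
    rw [ballAverage_congr_ae hu.1.ae_eq_mk]
    exact hu.1.stronglyMeasurable_mk.ballAverage.aestronglyMeasurable
  have hΔ : (fun x ↦ (1 / r ^ 2) * ⨍ y in ball x r, (u y - u x) ∂μ) =
      (1 / r ^ 2 : ℝ) • (ballAverage μ r u - u) := by
    ext x
    have : IsFiniteMeasure (μ.restrict (ball x r)) := isFiniteMeasure_restrict.mpr (hfin_r x)
    have : NeZero (μ.restrict (ball x r)) := ⟨by simpa using hpos_r x⟩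
    exact congrArg _ (average_sub_const ((hu.restrict _).integrable hp) (u x))
  have hbound : eLpNorm (fun x ↦ (1 / r ^ 2) * ⨍ y in ball x r, (u y - u x) ∂μ) p μ ≤
      ENNReal.ofReal (1 / r ^ 2) *
        (eLpNorm u p μ + eLpNorm u p (μ.withDensity (ballWeight μ r))) := by
    rw [hΔ, eLpNorm_const_smul, Real.enorm_of_nonneg (by positivity), add_comm (eLpNorm u p μ)]
    gcongr
    exact (eLpNorm_sub_le hA hu.1 hp).trans
      (add_le_add (eLpNorm_ballAverage_le hpos_r hfin_r hu.1 hp) le_rfl)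
  refine ⟨⟨hΔ ▸ (hA.sub hu.1).const_smul _, hbound.trans_lt ?_⟩, hbound⟩
  exact ENNReal.mul_lt_top ENNReal.ofReal_lt_top (ENNReal.add_lt_top.mpr ⟨hu.2, hu'.2⟩)
end
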